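/- Let h > 0, c > 0, and let y be a C¹ solution on (0, R₁] of y'(r) = h^{-4/3}(y(r)² - ψ(r)) with y(R₁) = 0, where ψ is continuous with 0 ≤ ψ(r) ≤ c. Then y(r) ≤ √c · tanh(h^{-4/3}√c(R₁ - r)) for all r ∈ (0, R₁]; in particular 0 ≤ y ≤ √c. -/

import Mathlib

/-!
Write `K = h ^ (-4/3)`, so that `K (y² - c) ≤ y' ≤ K y²`. For `m > √c` the function
`z r = m tanh (K m (R₁ - r))` solves `z' = K (z² - m²)` with `z R₁ = 0`, hence `y' > z'` wherever
`y = z`: going backwards from `R₁`, `y` can never cross above `z`, and letting `m ↓ √c` gives the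
`tanh` bound. In the same way the line `ε (r - R₁)` is a strict lower barrier for small `ε > 0`,
which gives `y ≥ 0`. Strict barriers let the fencing theorem for right derivatives, transported
to left derivatives by `r ↦ -r`, replace a mean value argument at a crossing point.
-/

open Real Set Filter Topology

theorem HasDerivWithinAt.comp_neg_Ici {f : ℝ → ℝ} {f' x : ℝ}
    (hf : HasDerivWithinAt f f' (Iic x) x) :
    HasDerivWithinAt (fun s => f (-s)) (-f') (Ici (-x)) (-x) := by
  have := hf.comp_of_eq (-x) (hasDerivAt_neg (-x)).hasDerivWithinAt (s := Ici (-x))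
    (fun s hs => show -s ≤ x from neg_le.mp hs) (neg_neg x).symm
  simpa [Function.comp_def] using this

theorem image_le_of_deriv_left_lt_deriv_boundary' {f f' B B' : ℝ → ℝ} {a b : ℝ}
    (hf : ContinuousOn f (Icc a b)) (hf' : ∀ x ∈ Ioc a b, HasDerivWithinAt f (f' x) (Iic x) x)
    (hb : f b ≤ B b) (hB : ContinuousOn B (Icc a b))
    (hB' : ∀ x ∈ Ioc a b, HasDerivWithinAt B (B' x) (Iic x) x)
    (bound : ∀ x ∈ Ioc a b, f x = B x → B' x < f' x) :
    ∀ ⦃x⦄, x ∈ Icc a b → f x ≤ B x := by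
  have neg_mem {x : ℝ} (hx : x ∈ Ico (-b) (-a)) : -x ∈ Ioc a b :=
    ⟨by linarith [hx.2], by linarith [hx.1]⟩
  have hmaps : MapsTo (fun s : ℝ => -s) (Icc (-b) (-a)) (Icc a b) :=
    fun s hs => ⟨by linarith [hs.2], by linarith [hs.1]⟩
  intro x hx
  have key := image_le_of_deriv_right_lt_deriv_boundary' (a := -b) (b := -a)
    (f := fun s => f (-s)) (B := fun s => B (-s))
    (hf.comp continuous_neg.continuousOn hmaps)
    (fun s hs => by simpa using (hf' _ (neg_mem hs)).comp_neg_Ici)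
    (by simpa using hb) (hB.comp continuous_neg.continuousOn hmaps)
    (fun s hs => by simpa using (hB' _ (neg_mem hs)).comp_neg_Ici)
    (fun s hs heq => neg_lt_neg (bound _ (neg_mem hs) heq))
    (x := -x) ⟨by linarith [hx.2], by linarith [hx.1]⟩
  simpa using key

theorem Real.hasDerivAt_tanh (x : ℝ) : HasDerivAt tanh (1 - tanh x ^ 2) x := by
  have h := (hasDerivAt_sinh x).div (hasDerivAt_cosh x) (cosh_pos x).ne'
  rw [show tanh = fun t => sinh t / cosh t from funext tanh_eq_sinh_div_cosh]
  refine h.congr_deriv ?_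
  dsimp only
  field_simp

@[fun_prop]
theorem Real.continuous_tanh : Continuous tanh :=
  continuous_iff_continuousAt.2 fun x => (hasDerivAt_tanh x).continuousAt

theorem hasDerivAt_mul_tanh_mul_sub (m K b r : ℝ) :
    HasDerivAt (fun r => m * tanh (K * m * (b - r)))
      (K * ((m * tanh (K * m * (b - r))) ^ 2 - m ^ 2)) r := by
  have hlin : HasDerivAt (fun r => K * m * (b - r)) (-(K * m)) r := by
    simpa using ((hasDerivAt_id r).const_sub b).const_mul (K * m)
  exact (((hasDerivAt_tanh _).comp r hlin).const_mul m).congr_deriv (by ring)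

theorem le_mul_tanh_of_riccati {y y' : ℝ → ℝ} {a b K c m : ℝ} (hK : 0 < K) (hm : c < m ^ 2)
    (hy : ContinuousOn y (Icc a b)) (hy' : ∀ x ∈ Ioc a b, HasDerivWithinAt y (y' x) (Iic x) x)
    (hriccati : ∀ x ∈ Ioc a b, K * (y x ^ 2 - c) ≤ y' x) (hb : y b ≤ 0) :
    ∀ x ∈ Icc a b, y x ≤ m * tanh (K * m * (b - x)) := by
  have hbarrier := hasDerivAt_mul_tanh_mul_sub m K b
  refine fun x hx => image_le_of_deriv_left_lt_deriv_boundary' hy hy' (by simpa using hb)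
    (fun r _ => (hbarrier r).continuousAt.continuousWithinAt)
    (fun r _ => (hbarrier r).hasDerivWithinAt) (fun r hr hyr => ?_) hx
  rw [← hyr]
  have := hriccati r hr
  -- `K (z² - m²) < K (z² - c) ≤ y'` since `c < m²`
  nlinarith

theorem le_sqrt_mul_tanh_of_riccati {y y' : ℝ → ℝ} {a b K c : ℝ} (hK : 0 < K)
    (hy : ContinuousOn y (Icc a b)) (hy' : ∀ x ∈ Ioc a b, HasDerivWithinAt y (y' x) (Iic x) x)
    (hriccati : ∀ x ∈ Ioc a b, K * (y x ^ 2 - c) ≤ y' x) (hb : y b ≤ 0) :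
    ∀ x ∈ Icc a b, y x ≤ √c * tanh (K * √c * (b - x)) := by
  intro x hx
  have hlim : Tendsto (fun m => m * tanh (K * m * (b - x))) (𝓝[>] √c)
      (𝓝 (√c * tanh (K * √c * (b - x)))) := by
    refine Continuous.tendsto' ?_ _ _ rfl |>.mono_left nhdsWithin_le_nhds
    fun_prop
  refine ge_of_tendsto hlim (eventually_nhdsWithin_of_forall fun m hm => ?_)
  exact le_mul_tanh_of_riccati hK (lt_sq_of_sqrt_lt hm) hy hy' hriccati hb x hx

theorem nonneg_of_riccati {y y' : ℝ → ℝ} {a b K : ℝ}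
    (hy : ContinuousOn y (Icc a b)) (hy' : ∀ x ∈ Ioc a b, HasDerivWithinAt y (y' x) (Iic x) x)
    (hriccati : ∀ x ∈ Ioc a b, y' x ≤ K * y x ^ 2) (hb : 0 ≤ y b) :
    ∀ x ∈ Icc a b, 0 ≤ y x := by
  intro x hx
  have hsmall : ∀ᶠ ε in 𝓝[>] (0 : ℝ), K * ε * (b - a) ^ 2 < 1 := by
    have : Tendsto (fun ε => K * ε * (b - a) ^ 2) (𝓝 0) (𝓝 0) :=
      (by fun_prop : Continuous fun ε => K * ε * (b - a) ^ 2).tendsto' 0 0 (by simp)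
    exact (this.eventually (gt_mem_nhds one_pos)).filter_mono nhdsWithin_le_nhds
  have hbarrier : ∀ᶠ ε in 𝓝[>] (0 : ℝ), ε * (x - b) ≤ y x := by
    filter_upwards [hsmall, self_mem_nhdsWithin] with ε hε (hε0 : 0 < ε)
    have hline (r : ℝ) : HasDerivAt (fun r => ε * (r - b)) ε r := by
      simpa using ((hasDerivAt_id r).sub_const b).const_mul ε
    refine image_le_of_deriv_left_lt_deriv_boundary'
      (fun r _ => (hline r).continuousAt.continuousWithinAt)
      (fun r _ => (hline r).hasDerivWithinAt) (by simpa using hb) hy hy'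
      (fun r hr hyr => ?_) hx
    have h1 := hriccati r hr
    rw [← hyr] at h1
    -- `y' ≤ K ε² (r - b)² < ε` because `K ε (b - a)² < 1`
    have h2 : (b - r) ^ 2 ≤ (b - a) ^ 2 := by nlinarith [hr.1, hr.2]
    rcases le_or_gt K 0 with hK | hK
    · nlinarith [mul_nonpos_of_nonpos_of_nonneg hK (mul_nonneg (sq_nonneg ε) (sq_nonneg (r - b)))]
    · nlinarith [mul_le_mul_of_nonneg_left h2 (mul_nonneg hK.le hε0.le)]
  have hlim : Tendsto (fun ε => ε * (x - b)) (𝓝[>] 0) (𝓝 0) := by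
    refine Continuous.tendsto' ?_ _ _ (by simp) |>.mono_left nhdsWithin_le_nhds
    fun_prop
  exact le_of_tendsto hlim hbarrier

theorem stmt_7_general (h c R₁ : ℝ) (hh : 0 < h)
    (ψ : ℝ → ℝ)
    (hψ : ∀ r ∈ Set.Ioc (0 : ℝ) R₁, 0 ≤ ψ r ∧ ψ r ≤ c)
    (y : ℝ → ℝ)
    (hode : ∀ r ∈ Set.Ioc (0 : ℝ) R₁,
      HasDerivWithinAt y (h ^ (-(4 : ℝ) / 3) * ((y r) ^ 2 - ψ r)) (Set.Ioc 0 R₁) r)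
    (hinit : y R₁ = 0) :
    ∀ r ∈ Set.Ioc (0 : ℝ) R₁,
      y r ≤ Real.sqrt c * Real.tanh (h ^ (-(4 : ℝ) / 3) * Real.sqrt c * (R₁ - r)) ∧
      0 ≤ y r ∧ y r ≤ Real.sqrt c := by
  intro r hr
  set K := h ^ (-(4 : ℝ) / 3)
  have hK : 0 < K := rpow_pos_of_pos hh _
  have hsub : Icc r R₁ ⊆ Ioc 0 R₁ := Icc_subset_Ioc_iff hr.2 |>.2 ⟨hr.1, le_rfl⟩
  have hmem (x) (hx : x ∈ Ioc r R₁) : x ∈ Ioc 0 R₁ := hsub (Ioc_subset_Icc_self hx)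
  have hy : ContinuousOn y (Icc r R₁) := (HasDerivWithinAt.continuousOn hode).mono hsub
  have hy' : ∀ x ∈ Ioc r R₁, HasDerivWithinAt y (K * (y x ^ 2 - ψ x)) (Iic x) x :=
    fun x hx => (hode x (hmem x hx)).mono_of_mem_nhdsWithin (Ioc_mem_nhdsLE_of_mem (hmem x hx))
  have hr' : r ∈ Icc r R₁ := left_mem_Icc.2 hr.2
  have upper := le_sqrt_mul_tanh_of_riccati (c := c) hK hy hy'
    (fun x hx => mul_le_mul_of_nonneg_left (by linarith [(hψ x (hmem x hx)).2]) hK.le) hinit.le r hr'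
  have lower := nonneg_of_riccati hy hy'
    (fun x hx => mul_le_mul_of_nonneg_left (by linarith [(hψ x (hmem x hx)).1]) hK.le) hinit.ge r hr'
  exact ⟨upper, lower, upper.trans (mul_le_of_le_one_right (sqrt_nonneg c) (tanh_lt_one _).le)⟩

theorem stmt_7 (h c R₁ : ℝ) (hh : 0 < h) (hc : 0 < c) (hR₁ : 0 < R₁)
    (ψ : ℝ → ℝ) (hψcont : ContinuousOn ψ (Set.Ioc 0 R₁))
    (hψ : ∀ r ∈ Set.Ioc (0 : ℝ) R₁, 0 ≤ ψ r ∧ ψ r ≤ c)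
    (y : ℝ → ℝ) (hy : ContDiffOn ℝ 1 y (Set.Ioc 0 R₁))
    (hode : ∀ r ∈ Set.Ioc (0 : ℝ) R₁,
      HasDerivWithinAt y (h ^ (-(4 : ℝ) / 3) * ((y r) ^ 2 - ψ r)) (Set.Ioc 0 R₁) r)
    (hinit : y R₁ = 0) :
    ∀ r ∈ Set.Ioc (0 : ℝ) R₁,
      y r ≤ Real.sqrt c * Real.tanh (h ^ (-(4 : ℝ) / 3) * Real.sqrt c * (R₁ - r)) ∧
      0 ≤ y r ∧ y r ≤ Real.sqrt c :=
  stmt_7_general h c R₁ hh ψ hψ y hode hinit
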